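/- Let l, m be nonnegative integers with m ≥ 1, let k be a positive integer, let N be a real s × s matrix with N^k = 0, let u : ℝ → ℝ^s be infinitely differentiable, and define the exact solution z(t) = Σ_{j=0}^{k−1} (−1)^j · N^j · u^{(j)}(t). Fix t_{n−1} ∈ ℝ. For each h > 0, suppose vectors ẑ^{(0)}(h), …, ẑ^{(m)}(h) ∈ ℝ^s satisfy the discretized relations N · ẑ^{(i+1)}(h) = −ẑ^{(i)}(h) + u^{(i)}(t_{n−1} + h) for i = 0, …, m−1, together with the Obreshkov closure Σ_{i=0}^{m} (−1)^i · α_{i,l,m} · h^i · ẑ^{(i)}(h) = Σ_{i=0}^{l} α_{i,m,l} · h^i · z^{(i)}(t_{n−1}). Then for each i with 0 ≤ i ≤ m: if m − i ≥ k, then ẑ^{(i)}(h) = z^{(i)}(t_{n−1} + h) for every h > 0; and if m − i < k, then h^i · (ẑ^{(i)}(h) − z^{(i)}(t_{n−1} + h)) = O(h^{l+m+2−k}) as h → 0⁺. -/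

import Mathlib

/-!
The errors `eᵢ = ẑ⁽ⁱ⁾ − z⁽ⁱ⁾(tₙ₋₁ + h)` satisfy the homogeneous chain `N eᵢ₊₁ = −eᵢ`, so
`eᵢ = (−N)^{m−i} e_m`; this vanishes as soon as `m − i ≥ k`. Substituted into the Obreshkov
closure, the errors satisfy `∑ᵢ (−1)ⁱ αᵢ hⁱ (−N)^{m−i} e_m = −ρ(h)`, where `ρ` is the local error
of the Obreshkov formula on the exact solution. The formula is exact on polynomials of degree
`l + m`, so Taylor expansion gives `ρ(h) = O(h^{l+m+1})`. Applying `N^j` to this relation and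
inducting downwards from `j = k` (where `N^j = 0`) bounds `N^j e_m` by `h^{l+2−k+j}`; the
leading coefficient `α_{m,l,m} hᵐ` is what has to be divided out at each step.
-/

/-- The Obreshkov coefficient `α_{i,l,m} = ((m+l−i)! / (m+l)!) · binom(m, i)`. -/
noncomputable def obreshkovAlpha (i l m : ℕ) : ℝ :=
  (Nat.factorial (m + l - i) : ℝ) / (Nat.factorial (m + l)) * (Nat.choose m i)

open Finset Filter Asymptotics Topology

open Polynomial in
theorem sum_neg_one_pow_mul_choose_mul_choose_sub {m n : ℕ} (p : ℕ) (hmn : m ≤ n) :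
    ∑ i ∈ range (min m p + 1), (-1 : ℤ) ^ i * m.choose i * (n - i).choose (p - i) =
      (n - m).choose p := by
  -- compare the coefficients of `Xᵖ` in `(X + 1)^(n - m) = (X + 1)^(n - m) (-X + (X + 1))ᵐ`
  have hpoly : (X + 1 : Polynomial ℤ) ^ (n - m) =
      ∑ i ∈ range (m + 1), C ((-1 : ℤ) ^ i * m.choose i) * (X ^ i * (X + 1) ^ (n - i)) := by
    calc (X + 1 : Polynomial ℤ) ^ (n - m)
        = (X + 1) ^ (n - m) * (-X + (X + 1)) ^ m := by simp
      _ = _ := by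
        rw [add_pow (-X), mul_sum]
        refine sum_congr rfl fun i hi => ?_
        rw [show n - i = n - m + (m - i) by grind, pow_add]
        simp only [map_mul, map_pow, map_neg, map_one, map_natCast]
        ring
  have hcoeff := congrArg (coeff · p) hpoly
  simp only [coeff_X_add_one_pow, finsetSum_coeff, coeff_C_mul, coeff_X_pow_mul', mul_ite,
    mul_zero] at hcoeff
  rw [hcoeff, ← sum_filter]
  exact sum_congr (by ext; simp only [mem_filter, mem_range]; omega) fun i _ => by ring

theorem obreshkovAlpha_pos {i l m : ℕ} (h : i ≤ m) : 0 < obreshkovAlpha i l m := by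
  have := Nat.choose_pos h
  unfold obreshkovAlpha
  positivity

theorem obreshkovAlpha_eq_zero_of_lt {i l m : ℕ} (h : m < i) : obreshkovAlpha i l m = 0 := by
  rw [obreshkovAlpha, Nat.choose_eq_zero_of_lt h, Nat.cast_zero, mul_zero]

theorem sum_neg_one_pow_mul_obreshkovAlpha_div_factorial {l m p : ℕ} (hp : p ≤ l + m) :
    ∑ i ∈ range (min m p + 1), (-1) ^ i * obreshkovAlpha i l m / (p - i).factorial =
      obreshkovAlpha p m l := by
  have hterm : ∀ i ∈ range (min m p + 1),
      (-1) ^ i * obreshkovAlpha i l m / (p - i).factorial =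
        (m + l - p).factorial / (m + l).factorial *
          ((-1 : ℤ) ^ i * m.choose i * (m + l - i).choose (p - i) : ℤ) := by
    intro i hi
    have hip : i ≤ p := by rw [mem_range] at hi; omega
    have hfac := Nat.choose_mul_factorial_mul_factorial (n := m + l - i) (k := p - i) (by omega)
    rw [show m + l - i - (p - i) = m + l - p by omega] at hfac
    rw [obreshkovAlpha, ← hfac]
    push_cast
    field_simp
  have hsum := sum_neg_one_pow_mul_choose_mul_choose_sub (n := m + l) p (Nat.le_add_right m l)
  rw [Nat.add_sub_cancel_left] at hsum
  rw [sum_congr rfl hterm, ← mul_sum, ← Int.cast_sum, hsum, obreshkovAlpha, add_comm l m]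
  push_cast
  ring

/-- The Obreshkov formula is exact on polynomials of degree `l + m`: here `v q` stands for the
`q`-th derivative at `t` of such a polynomial. -/
theorem sum_obreshkovAlpha_smul_taylor {E : Type*} [AddCommGroup E] [Module ℝ E]
    (l m : ℕ) (v : ℕ → E) (h : ℝ) :
    ∑ i ∈ range (m + 1), ((-1) ^ i * obreshkovAlpha i l m * h ^ i) •
        ∑ q ∈ range (l + m - i + 1), (h ^ q / q.factorial) • v (q + i) =
      ∑ p ∈ range (l + 1), (obreshkovAlpha p m l * h ^ p) • v p := by
  have hshift : ∀ i ∈ range (m + 1),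
      ((-1) ^ i * obreshkovAlpha i l m * h ^ i) •
          ∑ q ∈ range (l + m - i + 1), (h ^ q / q.factorial) • v (q + i) =
        ∑ p ∈ Ico i (l + m + 1),
          ((-1) ^ i * obreshkovAlpha i l m / (p - i).factorial * h ^ p) • v p := by
    intro i hi
    rw [mem_range] at hi
    rw [sum_Ico_eq_sum_range, smul_sum, show l + m + 1 - i = l + m - i + 1 by omega]
    refine sum_congr rfl fun q _ => ?_
    rw [smul_smul, add_comm i q, Nat.add_sub_cancel, pow_add]
    congr 1
    ring
  rw [sum_congr rfl hshift, sum_comm' (t' := range (l + m + 1))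
    (s' := fun p => range (min m p + 1)) (by intro i p; simp only [mem_range, mem_Ico]; omega)]
  symm
  refine sum_subset (range_subset_range.mpr (by omega)) (fun p _ hp => ?_) |>.trans
    (sum_congr rfl fun p hp => ?_)
  · rw [mem_range, not_lt] at hp
    rw [obreshkovAlpha_eq_zero_of_lt (by omega), zero_mul, zero_smul]
  · rw [mem_range] at hp
    rw [← sum_smul, ← sum_mul, sum_neg_one_pow_mul_obreshkovAlpha_div_factorial (by omega)]

section Calculus

variable {E : Type*} [NormedAddCommGroup E] [NormedSpace ℝ E]

theorem iteratedDeriv_iteratedDeriv {𝕜 F : Type*} [NontriviallyNormedField 𝕜]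
    [NormedAddCommGroup F] [NormedSpace 𝕜 F] (a b : ℕ) (f : 𝕜 → F) :
    iteratedDeriv a (iteratedDeriv b f) = iteratedDeriv (a + b) f := by
  simp only [iteratedDeriv_eq_iterate, Function.iterate_add]
  rfl

theorem ContDiff.iteratedDeriv {𝕜 F : Type*} [NontriviallyNormedField 𝕜]
    [NormedAddCommGroup F] [NormedSpace 𝕜 F] {f : 𝕜 → F} (hf : ContDiff 𝕜 (⊤ : ℕ∞) f) (j : ℕ) :
    ContDiff 𝕜 (⊤ : ℕ∞) (iteratedDeriv j f) := by
  rw [iteratedDeriv_eq_iterate]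
  exact hf.iterate_deriv j

theorem ContinuousLinearMap.iteratedDeriv_comp_left {𝕜 F G : Type*} [NontriviallyNormedField 𝕜]
    [NormedAddCommGroup F] [NormedSpace 𝕜 F] [NormedAddCommGroup G] [NormedSpace 𝕜 G]
    (g : F →L[𝕜] G) {f : 𝕜 → F} {x : 𝕜} {n : ℕ} (hf : ContDiffAt 𝕜 n f x) :
    iteratedDeriv n (g ∘ f) x = g (iteratedDeriv n f x) := by
  simp only [iteratedDeriv_eq_iteratedFDeriv, g.iteratedFDeriv_comp_left hf le_rfl]
  rfl

theorem taylor_isBigO_univ {f : ℝ → E} {x₀ : ℝ} {n : ℕ} (hf : ContDiff ℝ (n + 1 : ℕ) f) :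
    (fun x => f x - taylorWithinEval f n Set.univ x₀ x) =O[𝓝 x₀]
      fun x => (x - x₀) ^ (n + 1) := by
  have hnext : (fun x => (((n + 1 : ℝ) * n.factorial)⁻¹ * (x - x₀) ^ (n + 1)) •
      iteratedDerivWithin (n + 1) f Set.univ x₀) =O[𝓝 x₀] fun x => (x - x₀) ^ (n + 1) :=
    isBigO_iff.2 ⟨‖((n + 1 : ℝ) * n.factorial)⁻¹‖ * ‖iteratedDerivWithin (n + 1) f Set.univ x₀‖,
      .of_forall fun x => le_of_eq <| by rw [norm_smul, norm_mul]; ring⟩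
  refine ((taylor_isLittleO_univ hf).isBigO.add hnext).congr_left fun x => ?_
  rw [taylorWithinEval_succ]
  abel

theorem taylor_iteratedDeriv_isBigO {f : ℝ → E} {i n : ℕ} (hf : ContDiff ℝ (n + 1 + i : ℕ) f)
    (t : ℝ) :
    (fun h => iteratedDeriv i f (t + h) -
        ∑ q ∈ range (n + 1), (h ^ q / q.factorial) • iteratedDeriv (q + i) f t)
      =O[𝓝 0] fun h => h ^ (n + 1) := by
  have hfi : ContDiff ℝ (n + 1 : ℕ) (iteratedDeriv i f) := by
    rw [iteratedDeriv_eq_iterate]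
    exact hf.iterate_deriv' _ _
  have hshift : Tendsto (fun h => t + h) (𝓝 0) (𝓝 t) := by
    simpa using (continuous_const_add t).tendsto 0
  refine ((taylor_isBigO_univ hfi (x₀ := t)).comp_tendsto hshift).congr (fun h => ?_) fun h => ?_
  · simp only [Function.comp_apply, taylor_within_apply, iteratedDerivWithin_univ,
      iteratedDeriv_iteratedDeriv, add_sub_cancel_left, div_eq_inv_mul]
  · simp only [Function.comp_apply, add_sub_cancel_left]

noncomputable def obreshkovLocalError (l m : ℕ) (f : ℝ → E) (t h : ℝ) : E :=
  ∑ i ∈ range (m + 1), ((-1) ^ i * obreshkovAlpha i l m * h ^ i) • iteratedDeriv i f (t + h) -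
    ∑ i ∈ range (l + 1), (obreshkovAlpha i m l * h ^ i) • iteratedDeriv i f t

theorem obreshkovLocalError_isBigO {l m : ℕ} {f : ℝ → E} (hf : ContDiff ℝ (l + m + 1 : ℕ) f)
    (t : ℝ) : obreshkovLocalError l m f t =O[𝓝 0] fun h => h ^ (l + m + 1) := by
  have hsplit : obreshkovLocalError l m f t = fun h => ∑ i ∈ range (m + 1),
      ((-1) ^ i * obreshkovAlpha i l m * h ^ i) • (iteratedDeriv i f (t + h) -
        ∑ q ∈ range (l + m - i + 1), (h ^ q / q.factorial) • iteratedDeriv (q + i) f t) := by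
    funext h
    simp only [obreshkovLocalError, ← sum_obreshkovAlpha_smul_taylor l m _ h, smul_sub,
      sum_sub_distrib]
  rw [hsplit]
  refine IsBigO.fun_sum fun i hi => ?_
  rw [mem_range] at hi
  have hremainder := taylor_iteratedDeriv_isBigO (i := i) (n := l + m - i)
    (hf.of_le (by norm_cast; omega)) t
  refine (((isBigO_refl (fun h : ℝ => h ^ i) _).const_mul_left _).smul hremainder).congr_right
    fun h => ?_
  rw [smul_eq_mul, ← pow_add, show i + (l + m - i + 1) = l + m + 1 by omega]

end Calculus

section NilpotentDAE

variable {E : Type*} [NormedAddCommGroup E] [NormedSpace ℝ E] (N : E →L[ℝ] E)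

theorem apply_sum_neg_one_pow_smul_pow_apply_succ (k : ℕ) (v : ℕ → E) :
    N (∑ j ∈ range k, (-1 : ℝ) ^ j • (N ^ j) (v (j + 1))) =
      -∑ j ∈ range k, (-1 : ℝ) ^ j • (N ^ j) (v j) + v 0 - (-1 : ℝ) ^ k • (N ^ k) (v k) := by
  induction k with
  | zero => simp
  | succ k ih =>
    rw [sum_range_succ, map_add, ih, sum_range_succ, map_smul, ← mul_apply_eq_comp, ← pow_succ',
      pow_succ (-1 : ℝ), mul_neg_one, neg_smul]
    abel

theorem eq_neg_pow_apply_of_apply_succ_eq_neg {m : ℕ} {e : ℕ → E}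
    (he : ∀ i < m, N (e (i + 1)) = -e i) {i : ℕ} (hi : i ≤ m) :
    e i = ((-N) ^ (m - i)) (e m) := by
  have hstep : ∀ d i, i + d ≤ m → e i = ((-N) ^ d) (e (i + d)) := by
    intro d
    induction d with
    | zero => simp
    | succ d ih =>
      intro i hid
      rw [ih i (by omega), pow_succ, mul_apply_eq_comp, neg_apply, ← add_assoc,
        he (i + d) (by omega), neg_neg]
  simpa [Nat.add_sub_cancel' hi] using hstep (m - i) i (by omega)

/-- The solution `z = ∑_{j<k} (−N d/dt)ʲ u` of `N z' + z = u` when `N ^ k = 0`. -/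
noncomputable def daeSolution (k : ℕ) (u : ℝ → E) : ℝ → E := fun t =>
  ∑ j ∈ range k, (-1 : ℝ) ^ j • (N ^ j) (iteratedDeriv j u t)

theorem apply_daeSolution_deriv {k : ℕ} (hN : N ^ k = 0) (u : ℝ → E) (t : ℝ) :
    N (daeSolution N k (deriv u) t) = -daeSolution N k u t + u t := by
  simpa [daeSolution, ← iteratedDeriv_succ', hN] using
    apply_sum_neg_one_pow_smul_pow_apply_succ N k fun j => iteratedDeriv j u t

theorem iteratedDeriv_daeSolution {k : ℕ} {u : ℝ → E} (hu : ContDiff ℝ (⊤ : ℕ∞) u) (i : ℕ) :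
    iteratedDeriv i (daeSolution N k u) = daeSolution N k (iteratedDeriv i u) := by
  have hcomp : ∀ j t, (-1 : ℝ) ^ j • (N ^ j) (iteratedDeriv j u t) =
      (((-1 : ℝ) ^ j • N ^ j) ∘ iteratedDeriv j u) t := fun _ _ => rfl
  funext t
  unfold daeSolution
  simp only [hcomp]
  rw [iteratedDeriv_fun_sum fun j _ =>
    ((_ : E →L[ℝ] E).contDiff.comp (hu.iteratedDeriv j)).contDiffAt.of_le (mod_cast le_top)]
  refine sum_congr rfl fun j _ => ?_
  rw [ContinuousLinearMap.iteratedDeriv_comp_left _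
      ((hu.iteratedDeriv j).contDiffAt.of_le (mod_cast le_top)),
    iteratedDeriv_iteratedDeriv, iteratedDeriv_iteratedDeriv, add_comm, smul_apply]

theorem contDiff_daeSolution (k : ℕ) {u : ℝ → E} (hu : ContDiff ℝ (⊤ : ℕ∞) u) :
    ContDiff ℝ (⊤ : ℕ∞) (daeSolution N k u) :=
  ContDiff.sum fun j _ => ((N ^ j).contDiff.comp (hu.iteratedDeriv j)).const_smul _

theorem apply_iteratedDeriv_succ_daeSolution {k : ℕ} (hN : N ^ k = 0) {u : ℝ → E}
    (hu : ContDiff ℝ (⊤ : ℕ∞) u) (i : ℕ) (t : ℝ) :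
    N (iteratedDeriv (i + 1) (daeSolution N k u) t) =
      -iteratedDeriv i (daeSolution N k u) t + iteratedDeriv i u t := by
  rw [iteratedDeriv_daeSolution N hu, iteratedDeriv_daeSolution N hu, iteratedDeriv_succ,
    apply_daeSolution_deriv N hN]

end NilpotentDAE

section Asymptotics

variable {E : Type*} [NormedAddCommGroup E] [NormedSpace ℝ E]

theorem isBigO_zpow_zpow_nhdsGT_zero {a b : ℤ} (hab : b ≤ a) :
    (fun x : ℝ => x ^ a) =O[𝓝[>] 0] fun x => x ^ b := by
  refine IsBigO.of_bound 1 ?_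
  filter_upwards [Ioc_mem_nhdsGT (zero_lt_one' ℝ)] with x hx
  rw [one_mul, Real.norm_of_nonneg (zpow_nonneg hx.1.le _),
    Real.norm_of_nonneg (zpow_nonneg hx.1.le _)]
  exact zpow_le_zpow_right_of_le_one₀ hx.1 hx.2 hab

theorem isBigO_pow_smul_iff {f : ℝ → E} (a : ℕ) (c : ℤ) :
    (fun x : ℝ => x ^ a • f x) =O[𝓝[>] 0] (fun x => x ^ ((a : ℤ) + c)) ↔
      f =O[𝓝[>] 0] fun x => x ^ c := by
  have hne : ∀ᶠ x : ℝ in 𝓝[>] 0, x ≠ 0 := eventually_mem_nhdsWithin.mono fun x hx => hx.ne'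
  constructor
  · intro h
    refine ((isBigO_refl (fun x : ℝ => x ^ (-(a : ℤ))) _).smul h).congr' ?_ ?_
    · filter_upwards [hne] with x hx
      rw [smul_smul, ← zpow_natCast, ← zpow_add₀ hx, neg_add_cancel, zpow_zero, one_smul]
    · filter_upwards [hne] with x hx
      rw [smul_eq_mul, ← zpow_add₀ hx, neg_add_cancel_left]
  · intro h
    refine ((isBigO_refl (fun x : ℝ => x ^ a) _).smul h).congr' .rfl ?_
    filter_upwards [hne] with x hx
    rw [smul_eq_mul, ← zpow_natCast, ← zpow_add₀ hx]

theorem pow_apply_sum_smul_pow_sub_apply (M : E →L[ℝ] E) (c : ℕ → ℝ) (m j : ℕ) (h : ℝ)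
    (x : E) :
    (M ^ j) (∑ i ∈ range (m + 1), (c i * h ^ i) • (M ^ (m - i)) x) =
      ∑ i ∈ range m, c i • h ^ i • (M ^ (j + (m - i))) x + c m • h ^ m • (M ^ j) x := by
  simp only [sum_range_succ, Nat.sub_self, pow_zero, one_apply_eq_self, map_add, map_sum,
    map_smul, mul_smul, pow_add, mul_apply_eq_comp]

theorem isBigO_pow_apply_of_isBigO_sum {M : E →L[ℝ] E} {k m : ℕ} (hM : M ^ k = 0)
    {c : ℕ → ℝ} (hc : c m ≠ 0) {w : ℝ → E} {r : ℤ}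
    (hw : (fun h => ∑ i ∈ range (m + 1), (c i * h ^ i) • (M ^ (m - i)) (w h))
      =O[𝓝[>] 0] fun h => h ^ r) (j : ℕ) :
    (fun h => (M ^ j) (w h)) =O[𝓝[>] 0] fun h => h ^ (r + 1 + j - k - m) := by
  suffices hdesc : ∀ d j, k ≤ j + d →
      (fun h => (M ^ j) (w h)) =O[𝓝[>] 0] fun h => h ^ (r + 1 + j - k - m) from
    hdesc k j (by omega)
  intro d
  induction d with
  | zero =>
    intro j hj
    simp only [pow_eq_zero_of_le (by omega : k ≤ j) hM, zero_apply]
    exact isBigO_zero _ _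
  | succ d ih =>
    intro j hj
    by_cases hjd : k ≤ j + d
    · exact ih j hjd
    -- `j < k` makes `hʳ` small enough, and every other term involves a higher power of `M`
    have hhead : (fun h => (M ^ j) (∑ i ∈ range (m + 1), (c i * h ^ i) • (M ^ (m - i)) (w h)))
        =O[𝓝[>] 0] fun h => h ^ (r + 1 + j - k) :=
      ((M ^ j).isBigO_comp _ _).trans (hw.trans (isBigO_zpow_zpow_nhdsGT_zero (by omega)))
    have htail : ∀ i ∈ range m, (fun h => c i • h ^ i • (M ^ (j + (m - i))) (w h))
        =O[𝓝[>] 0] fun h => h ^ (r + 1 + j - k) := by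
      intro i hi
      rw [mem_range] at hi
      refine (((isBigO_pow_smul_iff i _).2 (ih (j + (m - i)) (by omega))).const_smul_left
        (c i)).congr_right fun h => ?_
      congr 1
      push_cast [Nat.cast_sub hi.le]
      ring
    have hlead := (hhead.sub (IsBigO.fun_sum htail)).congr_left fun h => by
      rw [pow_apply_sum_smul_pow_sub_apply, add_sub_cancel_left]
    rwa [isBigO_const_smul_left hc, show r + 1 + j - k = (m : ℤ) + (r + 1 + j - k - m) by ring,
      isBigO_pow_smul_iff] at hlead

end Asymptotics

section ObreshkovError

variable {E : Type*} [NormedAddCommGroup E] [NormedSpace ℝ E] {N : E →L[ℝ] E} {k l m : ℕ}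
  {u : ℝ → E} {tn : ℝ} {zhat : ℕ → ℝ → E}

theorem obreshkov_error_eq_neg_pow_apply (hN : N ^ k = 0) (hu : ContDiff ℝ (⊤ : ℕ∞) u)
    (hchain : ∀ h : ℝ, 0 < h → ∀ i < m,
      N (zhat (i + 1) h) = -zhat i h + iteratedDeriv i u (tn + h))
    {h : ℝ} (hh : 0 < h) {i : ℕ} (hi : i ≤ m) :
    zhat i h - iteratedDeriv i (daeSolution N k u) (tn + h) =
      ((-N) ^ (m - i)) (zhat m h - iteratedDeriv m (daeSolution N k u) (tn + h)) :=
  eq_neg_pow_apply_of_apply_succ_eq_neg N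
    (e := fun i => zhat i h - iteratedDeriv i (daeSolution N k u) (tn + h)) (fun j hj => by
      rw [map_sub, hchain h hh j hj, apply_iteratedDeriv_succ_daeSolution N hN hu]
      abel) hi

theorem obreshkov_error_eq_zero (hN : N ^ k = 0) (hu : ContDiff ℝ (⊤ : ℕ∞) u)
    (hchain : ∀ h : ℝ, 0 < h → ∀ i < m,
      N (zhat (i + 1) h) = -zhat i h + iteratedDeriv i u (tn + h))
    {h : ℝ} (hh : 0 < h) {i : ℕ} (hi : i ≤ m) (hki : k ≤ m - i) :
    zhat i h = iteratedDeriv i (daeSolution N k u) (tn + h) := by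
  have hNneg : (-N) ^ k = 0 := by rw [← neg_one_smul ℝ N, smul_pow, hN, smul_zero]
  rw [← sub_eq_zero, obreshkov_error_eq_neg_pow_apply hN hu hchain hh hi,
    pow_eq_zero_of_le hki hNneg, zero_apply]

theorem obreshkov_error_isBigO (hN : N ^ k = 0) (hu : ContDiff ℝ (⊤ : ℕ∞) u)
    (hchain : ∀ h : ℝ, 0 < h → ∀ i < m,
      N (zhat (i + 1) h) = -zhat i h + iteratedDeriv i u (tn + h))
    (hclosure : ∀ h : ℝ, 0 < h →
      ∑ i ∈ range (m + 1), ((-1 : ℝ) ^ i * obreshkovAlpha i l m * h ^ i) • zhat i h =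
        ∑ i ∈ range (l + 1),
          (obreshkovAlpha i m l * h ^ i) • iteratedDeriv i (daeSolution N k u) tn)
    {i : ℕ} (hi : i ≤ m) :
    (fun h : ℝ => h ^ i • (zhat i h - iteratedDeriv i (daeSolution N k u) (tn + h)))
      =O[𝓝[>] 0] fun h => h ^ ((l : ℤ) + m + 2 - k) := by
  set w := fun h => zhat m h - iteratedDeriv m (daeSolution N k u) (tn + h)
  have herr : ∀ᶠ h in 𝓝[>] 0, ∀ i ≤ m,
      zhat i h - iteratedDeriv i (daeSolution N k u) (tn + h) = ((-N) ^ (m - i)) (w h) :=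
    eventually_mem_nhdsWithin.mono fun h hh i hi =>
      obreshkov_error_eq_neg_pow_apply hN hu hchain hh hi
  have hNneg : (-N) ^ k = 0 := by rw [← neg_one_smul ℝ N, smul_pow, hN, smul_zero]
  have hlocal : obreshkovLocalError l m (daeSolution N k u) tn =O[𝓝[>] 0]
      fun h => h ^ (l + m + 1) :=
    (obreshkovLocalError_isBigO ((contDiff_daeSolution N k hu).of_le (mod_cast le_top)) tn).mono
      nhdsWithin_le_nhds
  have hrel : (fun h => ∑ i ∈ range (m + 1), ((-1) ^ i * obreshkovAlpha i l m * h ^ i) •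
      ((-N) ^ (m - i)) (w h)) =O[𝓝[>] 0] fun h => h ^ ((l + m + 1 : ℕ) : ℤ) := by
    refine (hlocal.neg_left.congr' ?_ .rfl).congr_right fun h => (zpow_natCast h _).symm
    filter_upwards [herr, eventually_mem_nhdsWithin] with h hh hpos
    rw [sum_congr rfl fun i hi => by rw [← hh i (by grind)]]
    simp only [smul_sub, sum_sub_distrib, hclosure h hpos, obreshkovLocalError, neg_sub]
  have hbound := isBigO_pow_apply_of_isBigO_sum hNneg
    (mul_ne_zero (pow_ne_zero _ (neg_ne_zero.2 one_ne_zero)) (obreshkovAlpha_pos le_rfl).ne') hrel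
    (m - i)
  refine ((isBigO_pow_smul_iff i _).2 hbound).congr' (herr.mono fun h hh => by simp only [hh i hi])
    (.of_forall fun h => ?_)
  push_cast [Nat.cast_sub hi]
  exact congrArg (h ^ ·) (by ring)

end ObreshkovError

theorem obreshkov_algebraic_error_component_general (l m : ℕ) {s : ℕ}
    (k : ℕ)
    (N : Matrix (Fin s) (Fin s) ℝ) (hN : N ^ k = 0)
    (u : ℝ → Fin s → ℝ) (hu : ContDiff ℝ (⊤ : ℕ∞) u)
    (z : ℝ → Fin s → ℝ)
    (hz : ∀ t : ℝ,
      z t = ∑ j ∈ Finset.range k,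
        ((-1 : ℝ) ^ j) • (N ^ j).mulVec (iteratedDeriv j u t))
    (tn : ℝ)
    (zhat : ℕ → ℝ → Fin s → ℝ)
    (hchain : ∀ h : ℝ, 0 < h → ∀ i < m,
      N.mulVec (zhat (i + 1) h) = -zhat i h + iteratedDeriv i u (tn + h))
    (hclosure : ∀ h : ℝ, 0 < h →
      ∑ i ∈ Finset.range (m + 1),
        ((-1 : ℝ) ^ i * obreshkovAlpha i l m * h ^ i) • zhat i h =
      ∑ i ∈ Finset.range (l + 1),
        (obreshkovAlpha i m l * h ^ i) • iteratedDeriv i z tn) :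
    ∀ i ≤ m,
      (k ≤ m - i → ∀ h : ℝ, 0 < h → zhat i h = iteratedDeriv i z (tn + h)) ∧
      (m - i < k →
        Asymptotics.IsBigO (nhdsWithin (0 : ℝ) (Set.Ioi 0))
          (fun h : ℝ => (h ^ i) • (zhat i h - iteratedDeriv i z (tn + h)))
          (fun h : ℝ => h ^ ((l : ℤ) + (m : ℤ) + 2 - (k : ℤ)))) := by
  let toCLM : Matrix (Fin s) (Fin s) ℝ →ₐ[ℝ] ((Fin s → ℝ) →L[ℝ] (Fin s → ℝ)) :=
    (Module.End.toContinuousLinearMap (Fin s → ℝ)).toAlgHom.comp Matrix.toLinAlgEquiv'.toAlgHom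
  have hAk : toCLM N ^ k = 0 := by rw [← map_pow, hN, map_zero]
  obtain rfl : z = daeSolution (toCLM N) k u := funext fun t => by
    simp only [hz, daeSolution, ← map_pow]
    rfl
  intro i hi
  exact ⟨fun hki h hh => obreshkov_error_eq_zero hAk hu hchain hh hi hki,
    fun _ => obreshkov_error_isBigO hAk hu hchain hclosure hi⟩

/-- Error of the Obreshkov method in the purely algebraic subsystem of a DAE of
index `k`: the approximations `ẑ^{(i)}(h)` produced by the discretized
relations and the Obreshkov closure are exact when `m − i ≥ k`, and satisfy
`hⁱ (ẑ^{(i)}(h) − z^{(i)}(t_{n−1}+h)) = O(h^{l+m+2−k})` as `h → 0⁺` when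
`m − i < k`. -/
theorem obreshkov_algebraic_error_component (l m : ℕ) (hm : 1 ≤ m) {s : ℕ}
    (k : ℕ) (hk : 0 < k)
    (N : Matrix (Fin s) (Fin s) ℝ) (hN : N ^ k = 0)
    (u : ℝ → Fin s → ℝ) (hu : ContDiff ℝ (⊤ : ℕ∞) u)
    (z : ℝ → Fin s → ℝ)
    (hz : ∀ t : ℝ,
      z t = ∑ j ∈ Finset.range k,
        ((-1 : ℝ) ^ j) • (N ^ j).mulVec (iteratedDeriv j u t))
    (tn : ℝ)
    (zhat : ℕ → ℝ → Fin s → ℝ)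
    (hchain : ∀ h : ℝ, 0 < h → ∀ i < m,
      N.mulVec (zhat (i + 1) h) = -zhat i h + iteratedDeriv i u (tn + h))
    (hclosure : ∀ h : ℝ, 0 < h →
      ∑ i ∈ Finset.range (m + 1),
        ((-1 : ℝ) ^ i * obreshkovAlpha i l m * h ^ i) • zhat i h =
      ∑ i ∈ Finset.range (l + 1),
        (obreshkovAlpha i m l * h ^ i) • iteratedDeriv i z tn) :
    ∀ i ≤ m,
      (k ≤ m - i → ∀ h : ℝ, 0 < h → zhat i h = iteratedDeriv i z (tn + h)) ∧
      (m - i < k →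
        Asymptotics.IsBigO (nhdsWithin (0 : ℝ) (Set.Ioi 0))
          (fun h : ℝ => (h ^ i) • (zhat i h - iteratedDeriv i z (tn + h)))
          (fun h : ℝ => h ^ ((l : ℤ) + (m : ℤ) + 2 - (k : ℤ)))) :=
  obreshkov_algebraic_error_component_general l m k N hN u hu z hz tn zhat hchain hclosure
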